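/- arXiv:1905.06006 — 3 statements merged into one kernel-verified Lean document; each statement's English description precedes it below -/
import Mathlib

section
/- Let g be a Riemannian metric on the strip U = ℝ × (−1,1) ⊂ ℝ² and let h be a smooth function on U such that dh_p · v ≥ |v|_g for every p ∈ U and every v with v_y ≥ |v_x| (the Minkowski cone). If moreover ∂h/∂y(x,0) ≤ 2/(1+x²) for all x ∈ ℝ, then the g-length of the horizontal axis {y = 0} is finite, and hence the metric g is not complete. -/
open Set Filter MeasureTheory Topology

section ConeFieldPrelim

variable {E : Type*} [NormedAddCommGroup E] [NormedSpace ℝ E]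

/-- A closed cone field on a normed space `E` (chart-free model of a manifold). -/
structure IsClosedConeField (C : Set (E × E)) : Prop where
  closed : IsClosed (C ∪ {p : E × E | p.2 = 0})
  nonzero : ∀ p ∈ C, p.2 ≠ (0 : E)
  convex : ∀ x : E, Convex ℝ {v : E | (x, v) ∈ C}
  homog : ∀ x v, (x, v) ∈ C → ∀ t : ℝ, 0 < t → (x, t • v) ∈ C

/-- The domain of a cone field: points with nonempty cone. -/
def coneDomain (C : Set (E × E)) : Set E := {x | ∃ v, (x, v) ∈ C}

/-- `γ` is a causal curve of the cone field `C` on the interval `I`: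
locally Lipschitz, with image in the domain, and derivative in the cone a.e. -/
def CausalCurveOn (C : Set (E × E)) (γ : ℝ → E) (I : Set ℝ) : Prop :=
  I.Nonempty ∧ I.OrdConnected ∧ γ '' I ⊆ coneDomain C ∧
  (∀ K : Set ℝ, IsCompact K → K ⊆ I → ∃ L : NNReal, LipschitzOnWith L γ K) ∧
  ∀ᵐ t : ℝ, t ∈ I → ∃ v : E, HasDerivWithinAt γ v I t ∧ (γ t, v) ∈ C

/-- Local solvability: through each point of the domain there is a nonconstant
causal curve defined on `(-1,1)`. -/
def LocallySolvable (C : Set (E × E)) : Prop :=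
  ∀ x ∈ coneDomain C, ∃ γ : ℝ → E,
    CausalCurveOn C γ (Ioo (-1 : ℝ) 1) ∧ γ 0 = x ∧ ∃ t ∈ Ioo (-1 : ℝ) 1, γ t ≠ x

/-- Causal future of a point. -/
def JPlus (C : Set (E × E)) (x : E) : Set E :=
  {y | ∃ T : ℝ, 0 ≤ T ∧ ∃ γ : ℝ → E, CausalCurveOn C γ (Icc 0 T) ∧ γ 0 = x ∧ γ T = y}

/-- Strictly causal future of a point. -/
def JPlusPlus (C : Set (E × E)) (x : E) : Set E :=
  {y | ∃ T : ℝ, 0 < T ∧ ∃ γ : ℝ → E, CausalCurveOn C γ (Icc 0 T) ∧ γ 0 = x ∧ γ T = y}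

/-- Causal past of a point. -/
def JMinus (C : Set (E × E)) (x : E) : Set E := {y | x ∈ JPlus C y}

def JPlusSet (C : Set (E × E)) (A : Set E) : Set E := ⋃ x ∈ A, JPlus C x

def JMinusSet (C : Set (E × E)) (A : Set E) : Set E := ⋃ x ∈ A, JMinus C x

/-- An inextensible causal curve: it admits no causal extension to a strictly larger set. -/
def InextCausal (C : Set (E × E)) (γ : ℝ → E) (I : Set ℝ) : Prop :=
  CausalCurveOn C γ I ∧
  ∀ (J : Set ℝ) (δ : ℝ → E), I ⊆ J → CausalCurveOn C δ J → Set.EqOn δ γ I → J = I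

open Classical in
noncomputable def upperEndFilter (I : Set ℝ) : Filter ℝ :=
  if BddAbove I then nhdsWithin (sSup I) I else Filter.atTop ⊓ Filter.principal I

open Classical in
noncomputable def lowerEndFilter (I : Set ℝ) : Filter ℝ :=
  if BddBelow I then nhdsWithin (sInf I) I else Filter.atBot ⊓ Filter.principal I

/-- A complete curve: defined on a nonempty open interval with no limit at either end. -/
def CompleteCurveOn (γ : ℝ → E) (I : Set ℝ) : Prop :=
  IsOpen I ∧ I.OrdConnected ∧ I.Nonempty ∧
  (¬ ∃ L : E, Filter.Tendsto γ (upperEndFilter I) (nhds L)) ∧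
  (¬ ∃ L : E, Filter.Tendsto γ (lowerEndFilter I) (nhds L))

/-- Causality: no point lies in its own strictly causal future. -/
def IsCausalField (C : Set (E × E)) : Prop := ∀ x : E, x ∉ JPlusPlus C x

/-- Global hyperbolicity: causal, compact diamonds, locally solvable. -/
def GloballyHyperbolic (C : Set (E × E)) : Prop :=
  IsCausalField C ∧
  (∀ K K' : Set E, IsCompact K → IsCompact K' →
    IsCompact (JPlusSet C K ∩ JMinusSet C K')) ∧
  LocallySolvable C

/-- A chart-free Riemannian metric: a continuous family of symmetric positive
definite bilinear forms. -/
def IsRiemMetric (g : E → E → E → ℝ) : Prop :=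
  (∀ x v w, g x v w = g x w v) ∧
  (∀ x (a : ℝ) u v w, g x (a • u + v) w = a * g x u w + g x v w) ∧
  (∀ x v, 0 ≤ g x v v) ∧ (∀ x v, v ≠ 0 → 0 < g x v v) ∧
  Continuous (fun p : E × E × E => g p.1 p.2.1 p.2.2)

/-- Norm of a tangent vector with respect to the metric `g`. -/
noncomputable def gnorm (g : E → E → E → ℝ) (x v : E) : ℝ := Real.sqrt (g x v v)

/-- Length of a curve with respect to `g`. -/
noncomputable def curveLength (g : E → E → E → ℝ) (γ : ℝ → E) (a b : ℝ) : ℝ :=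
  ∫ t in a..b, gnorm g (γ t) (deriv γ t)

/-- Completeness of the metric `g` on `U`: every differentiable curve in `U` of
bounded `g`-length has a limit in `U`. -/
def RiemComplete (g : E → E → E → ℝ) (U : Set E) : Prop :=
  ∀ γ : ℝ → E, (∀ t : ℝ, 0 ≤ t → γ t ∈ U) → Differentiable ℝ γ →
    (∃ L : ℝ, ∀ b : ℝ, 0 ≤ b → curveLength g γ 0 b ≤ L) →
    ∃ x ∈ U, Filter.Tendsto γ Filter.atTop (nhds x)

/-- Distance induced by the metric `g`. -/
noncomputable def riemDist (g : E → E → E → ℝ) (x y : E) : ℝ :=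
  sInf {L : ℝ | ∃ γ : ℝ → E, Differentiable ℝ γ ∧ γ 0 = x ∧ γ 1 = y ∧
    L = curveLength g γ 0 1}

end ConeFieldPrelim

section Aux
variable {E : Type*} [NormedAddCommGroup E] [NormedSpace ℝ E]

theorem riem_zero (g : E → E → E → ℝ)
    (hlin : ∀ x (a : ℝ) u v w, g x (a • u + v) w = a * g x u w + g x v w)
    (x w : E) : g x 0 w = 0 := by
  have := hlin x 1 0 0 w
  simpa using this

theorem riem_add (g : E → E → E → ℝ)
    (hlin : ∀ x (a : ℝ) u v w, g x (a • u + v) w = a * g x u w + g x v w)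
    (x u v w : E) : g x (u + v) w = g x u w + g x v w := by
  have := hlin x 1 u v w; simpa using this

theorem riem_smul (g : E → E → E → ℝ)
    (hlin : ∀ x (a : ℝ) u v w, g x (a • u + v) w = a * g x u w + g x v w)
    (x : E) (a : ℝ) (u w : E) : g x (a • u) w = a * g x u w := by
  have := hlin x a u 0 w
  simpa [riem_zero g hlin] using this

theorem riem_add' (g : E → E → E → ℝ)
    (hsymm : ∀ x v w, g x v w = g x w v)
    (hlin : ∀ x (a : ℝ) u v w, g x (a • u + v) w = a * g x u w + g x v w)
    (x u v w : E) : g x w (u + v) = g x w u + g x w v := by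
  rw [hsymm x w (u + v), riem_add g hlin, hsymm x u w, hsymm x v w]

theorem riem_smul' (g : E → E → E → ℝ)
    (hsymm : ∀ x v w, g x v w = g x w v)
    (hlin : ∀ x (a : ℝ) u v w, g x (a • u + v) w = a * g x u w + g x v w)
    (x : E) (a : ℝ) (u w : E) : g x w (a • u) = a * g x w u := by
  rw [hsymm x w (a • u), riem_smul g hlin, hsymm x u w]

theorem riem_cs (g : E → E → E → ℝ) (hg : IsRiemMetric g) (x u w : E) :
    g x u w ≤ Real.sqrt (g x u u) * Real.sqrt (g x w w) := by
  have hsymm := hg.1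
  have hlin := hg.2.1
  have hnn := hg.2.2.1
  have hq : ∀ t : ℝ, 0 ≤ g x w w * (t * t) + (2 * g x u w) * t + g x u u := by
    intro t
    have h0 := hnn x (u + t • w)
    have he : g x (u + t • w) (u + t • w)
        = g x w w * (t * t) + (2 * g x u w) * t + g x u u := by
      simp only [riem_add g hlin, riem_smul g hlin, riem_add' g hsymm hlin,
        riem_smul' g hsymm hlin]
      rw [hsymm x w u]; ring
    linarith [he ▸ h0]
  have hd := discrim_le_zero hq
  unfold discrim at hd
  have h1 : (g x u w) ^ 2 ≤ g x u u * g x w w := by nlinarith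
  calc g x u w ≤ |g x u w| := le_abs_self _
    _ = Real.sqrt ((g x u w) ^ 2) := (Real.sqrt_sq_eq_abs _).symm
    _ ≤ Real.sqrt (g x u u * g x w w) := Real.sqrt_le_sqrt h1
    _ = Real.sqrt (g x u u) * Real.sqrt (g x w w) := Real.sqrt_mul (hnn x u) _

theorem gnorm_triangle (g : E → E → E → ℝ) (hg : IsRiemMetric g) (x u w : E) :
    gnorm g x (u + w) ≤ gnorm g x u + gnorm g x w := by
  have hcs := riem_cs g hg x u w
  have hsymm := hg.1
  have hlin := hg.2.1
  have hnn := hg.2.2.1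
  have hexp : g x (u + w) (u + w) = g x u u + 2 * g x u w + g x w w := by
    simp only [riem_add g hlin, riem_add' g hsymm hlin]
    rw [hsymm x w u]; ring
  unfold gnorm
  have h2 : g x (u + w) (u + w)
      ≤ (Real.sqrt (g x u u) + Real.sqrt (g x w w)) ^ 2 := by
    rw [hexp]
    have hu := Real.sq_sqrt (hnn x u)
    have hw := Real.sq_sqrt (hnn x w)
    nlinarith
  calc Real.sqrt (g x (u + w) (u + w))
      ≤ Real.sqrt ((Real.sqrt (g x u u) + Real.sqrt (g x w w)) ^ 2) :=
        Real.sqrt_le_sqrt h2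
    _ = |Real.sqrt (g x u u) + Real.sqrt (g x w w)| := Real.sqrt_sq_eq_abs _
    _ = Real.sqrt (g x u u) + Real.sqrt (g x w w) := abs_of_nonneg (by positivity)

theorem gnorm_smul (g : E → E → E → ℝ) (hg : IsRiemMetric g)
    (x : E) (a : ℝ) (v : E) : gnorm g x (a • v) = |a| * gnorm g x v := by
  have hsymm := hg.1
  have hlin := hg.2.1
  unfold gnorm
  rw [riem_smul g hlin, riem_smul' g hsymm hlin,
    show a * (a * g x v v) = a ^ 2 * g x v v by ring,
    Real.sqrt_mul (by positivity), Real.sqrt_sq_eq_abs]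

end Aux


/-- If `g` is a Riemannian metric on the strip `U = ℝ × (−1,1)` and `h` is a
smooth function with `dh_p·v ≥ |v|_g` for all `p ∈ U` and all Minkowski cone vectors `v`,
and if `∂h/∂y(x,0) ≤ 2/(1+x²)`, then the `g`-length of the axis `{y = 0}` is finite and
the metric `g` is not complete. -/
theorem stmt_1 (g : ℝ × ℝ → (ℝ × ℝ) → (ℝ × ℝ) → ℝ) (hg : IsRiemMetric g)
    (h : ℝ × ℝ → ℝ) (hsm : ContDiff ℝ (⊤ : ℕ∞) h)
    (hunif : ∀ p : ℝ × ℝ, p.2 ∈ Set.Ioo (-1 : ℝ) 1 → ∀ v : ℝ × ℝ, |v.1| ≤ v.2 →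
      gnorm g p v ≤ fderiv ℝ h p v)
    (hdy : ∀ x : ℝ, fderiv ℝ h (x, 0) (0, 1) ≤ 2 / (1 + x ^ 2)) :
    MeasureTheory.Integrable (fun x : ℝ => gnorm g (x, 0) (1, 0)) ∧
    ¬ RiemComplete g {p : ℝ × ℝ | p.2 ∈ Set.Ioo (-1 : ℝ) 1} := by
  set F : ℝ → ℝ := fun x => gnorm g (x, 0) (1, 0) with hF
  have hmem0 : (0 : ℝ) ∈ Set.Ioo (-1 : ℝ) 1 := by norm_num
  have key : ∀ x : ℝ, F x ≤ 2 / (1 + x ^ 2) := by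
    intro x
    set p : ℝ × ℝ := (x, 0) with hp
    have hu : gnorm g p ((1 : ℝ), (1 : ℝ)) ≤ fderiv ℝ h p (1, 1) :=
      hunif p hmem0 (1, 1) (by norm_num)
    have hw : gnorm g p ((-1 : ℝ), (1 : ℝ)) ≤ fderiv ℝ h p (-1, 1) :=
      hunif p hmem0 (-1, 1) (by norm_num)
    have hsum : fderiv ℝ h p (1, 1) + fderiv ℝ h p (-1, 1) ≤ 4 / (1 + x ^ 2) := by
      have hadd : fderiv ℝ h p (1, 1) + fderiv ℝ h p (-1, 1)
          = fderiv ℝ h p ((0 : ℝ), (2 : ℝ)) := by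
        rw [← (fderiv ℝ h p).map_add]
        congr 1
        simp only [Prod.mk_add_mk, Prod.mk.injEq]
        norm_num
      have h2 : fderiv ℝ h p ((0 : ℝ), (2 : ℝ)) = 2 * fderiv ℝ h p (0, 1) := by
        have : ((0 : ℝ), (2 : ℝ)) = (2 : ℝ) • ((0 : ℝ), (1 : ℝ)) := by
          simp [Prod.ext_iff, Prod.smul_mk]
        rw [this, (fderiv ℝ h p).map_smul]; simp
      have hd1 := hdy x
      have hr : (4 : ℝ) / (1 + x ^ 2) = 2 * (2 / (1 + x ^ 2)) := by ring
      rw [hadd, h2, hp, hr]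
      linarith
    have htri : gnorm g p ((2 : ℝ), (0 : ℝ))
        ≤ gnorm g p (1, 1) + gnorm g p (-1, 1) := by
      have heq : ((2 : ℝ), (0 : ℝ)) = ((1 : ℝ), (1 : ℝ)) + ((1 : ℝ), (-1 : ℝ)) := by
        simp only [Prod.mk_add_mk, Prod.mk.injEq]
        norm_num
      have hneg : ((1 : ℝ), (-1 : ℝ)) = (-1 : ℝ) • ((-1 : ℝ), (1 : ℝ)) := by
        simp [Prod.ext_iff, Prod.smul_mk]
      calc gnorm g p ((2 : ℝ), (0 : ℝ))
          ≤ gnorm g p (1, 1) + gnorm g p ((1 : ℝ), (-1 : ℝ)) := by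
            rw [heq]; exact gnorm_triangle g hg p _ _
        _ = gnorm g p (1, 1) + gnorm g p (-1, 1) := by
            rw [hneg, gnorm_smul g hg]; norm_num
    have h2g : gnorm g p ((2 : ℝ), (0 : ℝ)) = 2 * gnorm g p (1, 0) := by
      have : ((2 : ℝ), (0 : ℝ)) = (2 : ℝ) • ((1 : ℝ), (0 : ℝ)) := by
        simp [Prod.ext_iff, Prod.smul_mk]
      rw [this, gnorm_smul g hg]; norm_num
    have h2F : 2 * F x ≤ 4 / (1 + x ^ 2) := by
      have : F x = gnorm g p (1, 0) := by rw [hF]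
      rw [this, ← h2g]
      linarith
    have hr : (4 : ℝ) / (1 + x ^ 2) = 2 * (2 / (1 + x ^ 2)) := by ring
    linarith [hr ▸ h2F]
  have hFnn : ∀ x : ℝ, 0 ≤ F x := fun x => Real.sqrt_nonneg _
  have hFcont : Continuous F := by
    have : Continuous fun x : ℝ =>
        ((x, (0 : ℝ)), (((1 : ℝ), (0 : ℝ)), ((1 : ℝ), (0 : ℝ)))) := by fun_prop
    exact Real.continuous_sqrt.comp (hg.2.2.2.2.comp this)
  have hdom : MeasureTheory.Integrable (fun x : ℝ => 2 / (1 + x ^ 2)) := by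
    have := integrable_inv_one_add_sq.const_mul 2
    simpa [div_eq_mul_inv] using this
  have hFint : MeasureTheory.Integrable F := by
    refine hdom.mono hFcont.aestronglyMeasurable (Filter.Eventually.of_forall fun x => ?_)
    rw [Real.norm_eq_abs, Real.norm_eq_abs, abs_of_nonneg (hFnn x),
      abs_of_nonneg (by positivity)]
    exact key x
  refine ⟨hFint, ?_⟩
  intro hcomp
  set γ : ℝ → ℝ × ℝ := fun t => (t, 0) with hγ
  have hd : ∀ t : ℝ, HasDerivAt γ ((1 : ℝ), (0 : ℝ)) t := fun t =>
    HasDerivAt.prodMk (hasDerivAt_id t) (hasDerivAt_const t 0)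
  have hdiff : Differentiable ℝ γ := fun t => (hd t).differentiableAt
  have hderiv : ∀ t : ℝ, deriv γ t = ((1 : ℝ), (0 : ℝ)) := fun t => (hd t).deriv
  have hbound : ∀ b : ℝ, 0 ≤ b → curveLength g γ 0 b ≤ ∫ x : ℝ, F x := by
    intro b hb
    have heq : curveLength g γ 0 b = ∫ t in Set.Ioc (0 : ℝ) b, F t := by
      unfold curveLength
      rw [intervalIntegral.integral_of_le hb]
      refine MeasureTheory.setIntegral_congr_fun measurableSet_Ioc fun t _ => ?_
      rw [hderiv t]
    rw [heq]
    exact MeasureTheory.setIntegral_le_integral hFint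
      (Filter.Eventually.of_forall hFnn)
  obtain ⟨x, -, hx⟩ := hcomp γ (fun t _ => hmem0) hdiff ⟨_, hbound⟩
  have hfst : Filter.Tendsto (fun t : ℝ => (γ t).1) Filter.atTop (nhds x.1) :=
    ((continuous_fst.tendsto x).comp hx)
  have : Filter.Tendsto (id : ℝ → ℝ) Filter.atTop (nhds x.1) := hfst
  exact not_tendsto_nhds_of_tendsto_atTop tendsto_id x.1 this
end

section
/- Let C be a globally hyperbolic closed cone field (causal, J⁺(K) ∩ J⁻(K') compact for all compact K, K', and locally solvable) and let F ⊂ M be a closed set with J⁻(F) ⊂ F. Then the complement U = M \ F, equipped with the restricted cone field C|_U, is globally hyperbolic as a cone field on the manifold U: it is locally solvable in U and J⁺_{C|U}(K) ∩ J⁻_{C|U}(K') is compact for all compact K, K' ⊂ U. -/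
open Set Filter MeasureTheory Topology

/-- The restriction of a cone field to a subset of the base. -/
def restrictCone {E : Type*} [NormedAddCommGroup E] [NormedSpace ℝ E]
    (C : Set (E × E)) (U : Set E) : Set (E × E) := {p ∈ C | p.1 ∈ U}

section Stmt9Aux

variable {E : Type*} [NormedAddCommGroup E] [NormedSpace ℝ E]

lemma causal_of_restrict {C : Set (E × E)} {U : Set E} {γ : ℝ → E} {I : Set ℝ}
    (h : CausalCurveOn (restrictCone C U) γ I) : CausalCurveOn C γ I := by
  obtain ⟨h1, h2, h3, h4, h5⟩ := h
  refine ⟨h1, h2, ?_, h4, ?_⟩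
  · intro y hy
    obtain ⟨v, hv⟩ := h3 hy
    exact ⟨v, hv.1⟩
  · filter_upwards [h5] with t ht hI
    obtain ⟨v, hd, hv⟩ := ht hI
    exact ⟨v, hd, hv.1⟩

lemma causal_restrict_interval {C : Set (E × E)} {γ : ℝ → E} {I J : Set ℝ}
    (h : CausalCurveOn C γ I) (hJI : J ⊆ I) (hne : J.Nonempty)
    (hoc : J.OrdConnected) : CausalCurveOn C γ J := by
  obtain ⟨h1, h2, h3, h4, h5⟩ := h
  refine ⟨hne, hoc, (Set.image_mono (f := γ) hJI).trans h3,
    fun K hK hKJ => h4 K hK (hKJ.trans hJI), ?_⟩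
  filter_upwards [h5] with t ht htJ
  obtain ⟨v, hd, hv⟩ := ht (hJI htJ)
  exact ⟨v, hd.mono hJI, hv⟩

lemma causal_into_restrict {C : Set (E × E)} {U : Set E} {γ : ℝ → E} {I : Set ℝ}
    (h : CausalCurveOn C γ I) (hU : ∀ t ∈ I, γ t ∈ U) :
    CausalCurveOn (restrictCone C U) γ I := by
  obtain ⟨h1, h2, h3, h4, h5⟩ := h
  refine ⟨h1, h2, ?_, h4, ?_⟩
  · rintro y ⟨t, ht, rfl⟩
    obtain ⟨v, hv⟩ := h3 ⟨t, ht, rfl⟩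
    exact ⟨v, hv, hU t ht⟩
  · filter_upwards [h5] with t ht htI
    obtain ⟨v, hd, hv⟩ := ht htI
    exact ⟨v, hd, hv, hU t htI⟩

lemma mem_JPlus_of_curve {C : Set (E × E)} {γ : ℝ → E} {T : ℝ}
    (h : CausalCurveOn C γ (Icc 0 T)) {s : ℝ} (hs : s ∈ Icc 0 T) :
    γ s ∈ JPlus C (γ 0) :=
  ⟨s, hs.1, γ, causal_restrict_interval h (Icc_subset_Icc le_rfl hs.2)
    (nonempty_Icc.2 hs.1) Set.ordConnected_Icc, rfl, rfl⟩

lemma stay_out {C : Set (E × E)} {F : Set E} (hpast : JMinusSet C F ⊆ F)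
    {γ : ℝ → E} {T : ℝ} (h : CausalCurveOn C γ (Icc 0 T)) (h0 : γ 0 ∉ F) :
    ∀ s ∈ Icc 0 T, γ s ∉ F := by
  intro s hs hsF
  exact h0 (hpast (Set.mem_biUnion hsF (mem_JPlus_of_curve h hs)))

lemma exists_ne_of_causal {C : Set (E × E)} (hC : IsClosedConeField C)
    {γ : ℝ → E} (h : CausalCurveOn C γ (Ioo (-1 : ℝ) 1)) :
    ∃ t ∈ Ioo (-1 : ℝ) 1, γ t ≠ γ 0 := by
  by_contra hcon
  push_neg at hcon
  obtain ⟨-, -, -, -, h5⟩ := h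
  have hA : volume {t : ℝ | ¬ (t ∈ Ioo (-1 : ℝ) 1 → ∃ v : E,
      HasDerivWithinAt γ v (Ioo (-1 : ℝ) 1) t ∧ (γ t, v) ∈ C)} = 0 :=
    MeasureTheory.ae_iff.mp h5
  have hsub : ¬ (Ioo (-1 : ℝ) 1 ⊆ {t : ℝ | ¬ (t ∈ Ioo (-1 : ℝ) 1 → ∃ v : E,
      HasDerivWithinAt γ v (Ioo (-1 : ℝ) 1) t ∧ (γ t, v) ∈ C)}) := by
    intro hsub
    have := (measure_mono hsub).trans_eq hA
    rw [Real.volume_Ioo] at this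
    simp at this
    norm_num at this
  rw [Set.not_subset] at hsub
  obtain ⟨t, htI, ht⟩ := hsub
  simp only [Set.mem_setOf_eq, not_not] at ht
  obtain ⟨v, hd, hv⟩ := ht htI
  have hnhds : Ioo (-1 : ℝ) 1 ∈ nhds t := isOpen_Ioo.mem_nhds htI
  have hda : HasDerivAt γ v t := hd.hasDerivAt hnhds
  have hconst : HasDerivAt γ 0 t := by
    have h0 : HasDerivAt (fun _ : ℝ => γ 0) (0 : E) t := hasDerivAt_const t _
    apply h0.congr_of_eventuallyEq
    filter_upwards [hnhds] with s hs using hcon s hs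
  exact hC.nonzero _ hv (hda.unique hconst)

lemma restrict_locallySolvable {C : Set (E × E)} (hC : IsClosedConeField C)
    (hls : LocallySolvable C) {U : Set E} (hU : IsOpen U) :
    LocallySolvable (restrictCone C U) := by
  intro x hx
  obtain ⟨v0, hv0, hxU⟩ := hx
  obtain ⟨γ, hγ, hγ0, -⟩ := hls x ⟨v0, hv0⟩
  have hIccsub : Icc (-(1 : ℝ)/2) (1/2) ⊆ Ioo (-1 : ℝ) 1 :=
    Icc_subset_Ioo (by norm_num) (by norm_num)
  obtain ⟨L, hL⟩ := hγ.2.2.2.1 _ isCompact_Icc hIccsub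
  have hcont : ContinuousAt γ 0 :=
    hL.continuousOn.continuousAt (Icc_mem_nhds (by norm_num) (by norm_num))
  have hpre : γ ⁻¹' U ∈ nhds (0 : ℝ) := hcont.preimage_mem_nhds (hU.mem_nhds (hγ0 ▸ hxU))
  obtain ⟨ε, hε, hball⟩ := Metric.mem_nhds_iff.mp hpre
  set c : ℝ := min ε 1 / 2 with hcdef
  have hc : 0 < c := by positivity
  have hcε : c < ε := by
    have : min ε 1 ≤ ε := min_le_left _ _
    simp only [hcdef]; linarith
  have hc1 : c < 1 := by
    have : min ε 1 ≤ 1 := min_le_right _ _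
    simp only [hcdef]; linarith
  have hmapsI : ∀ s ∈ Ioo (-1 : ℝ) 1, c * s ∈ Ioo (-1 : ℝ) 1 := by
    intro s hs
    have h1 : |c * s| < c := by
      rw [abs_mul, abs_of_pos hc]
      calc c * |s| < c * 1 := by
            apply mul_lt_mul_of_pos_left _ hc
            exact abs_lt.mpr ⟨hs.1, hs.2⟩
        _ = c := mul_one c
    constructor
    · nlinarith [abs_lt.mp h1]
    · nlinarith [abs_lt.mp h1]
  have hballmem : ∀ s ∈ Ioo (-1 : ℝ) 1, γ (c * s) ∈ U := by
    intro s hs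
    apply hball
    rw [Metric.mem_ball, Real.dist_eq, sub_zero, abs_mul, abs_of_pos hc]
    calc c * |s| ≤ c * 1 := by
          apply mul_le_mul_of_nonneg_left _ hc.le
          exact (abs_lt.mpr ⟨hs.1, hs.2⟩).le
      _ = c := mul_one c
      _ < ε := hcε
  set δ : ℝ → E := fun t => γ (c * t) with hδdef
  obtain ⟨hne, hoc, him, hlip, hae⟩ := hγ
  have hδcausal : CausalCurveOn (restrictCone C U) δ (Ioo (-1 : ℝ) 1) := by
    refine ⟨⟨0, by norm_num⟩, Set.ordConnected_Ioo, ?_, ?_, ?_⟩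
    · rintro y ⟨t, ht, rfl⟩
      obtain ⟨v, hv⟩ := him ⟨c * t, hmapsI t ht, rfl⟩
      exact ⟨v, hv, hballmem t ht⟩
    · intro K hK hKI
      have hK' : IsCompact ((fun t : ℝ => c * t) '' K) :=
        hK.image (continuous_const.mul continuous_id)
      have hK'I : (fun t : ℝ => c * t) '' K ⊆ Ioo (-1 : ℝ) 1 := by
        rintro y ⟨t, ht, rfl⟩; exact hmapsI t (hKI ht)
      obtain ⟨L', hL'⟩ := hlip _ hK' hK'I
      have hmul : LipschitzWith (Real.toNNReal c) (fun t : ℝ => c * t) := by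
        apply LipschitzWith.of_dist_le_mul
        intro a b
        rw [Real.dist_eq, Real.dist_eq, ← mul_sub, abs_mul, abs_of_pos hc,
          Real.coe_toNNReal c hc.le]
      refine ⟨L' * Real.toNNReal c, ?_⟩
      exact hL'.comp (hmul.lipschitzOnWith (s := K)) (Set.mapsTo_image _ _)
    · have hA : volume {t : ℝ | ¬ (t ∈ Ioo (-1 : ℝ) 1 → ∃ v : E,
          HasDerivWithinAt γ v (Ioo (-1 : ℝ) 1) t ∧ (γ t, v) ∈ C)} = 0 :=
        MeasureTheory.ae_iff.mp hae
      have hB : volume ((fun s : ℝ => c * s) ⁻¹' {t : ℝ | ¬ (t ∈ Ioo (-1 : ℝ) 1 → ∃ v : E,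
          HasDerivWithinAt γ v (Ioo (-1 : ℝ) 1) t ∧ (γ t, v) ∈ C)}) = 0 := by
        rw [Real.volume_preimage_mul_left (ne_of_gt hc), hA, mul_zero]
      refine MeasureTheory.ae_iff.mpr (measure_mono_null ?_ hB)
      intro s hs
      simp only [Set.mem_setOf_eq] at hs
      simp only [Set.mem_preimage, Set.mem_setOf_eq]
      intro hP
      apply hs
      intro hsI
      obtain ⟨v, hd, hv⟩ := hP (hmapsI s hsI)
      refine ⟨c • v, ?_, ?_, hballmem s hsI⟩
      · have hh : HasDerivWithinAt (fun t : ℝ => c * t) c (Ioo (-1 : ℝ) 1) s := by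
          simpa using ((hasDerivAt_id s).const_mul c).hasDerivWithinAt
        have hmt : Set.MapsTo (fun t : ℝ => c * t) (Ioo (-1 : ℝ) 1) (Ioo (-1 : ℝ) 1) :=
          fun t ht => hmapsI t ht
        exact hd.scomp_of_eq s hh hmt rfl
      · exact hC.homog _ _ hv c hc
  refine ⟨δ, hδcausal, by simp [hδdef, hγ0], ?_⟩
  obtain ⟨t, ht, hne'⟩ := exists_ne_of_causal hC (causal_of_restrict hδcausal)
  refine ⟨t, ht, ?_⟩
  rwa [show δ 0 = x by simp [hδdef, hγ0]] at hne'

end Stmt9Aux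

/-- If `C` is globally hyperbolic and `F` is a closed past set
(`J⁻(F) ⊆ F`), then the restriction of `C` to the complement `U = M \ F` is globally
hyperbolic on `U`: causal, locally solvable in `U`, with compact diamonds for compacts
of `U`. -/
theorem stmt_9 {E : Type*} [NormedAddCommGroup E] [NormedSpace ℝ E]
    (C : Set (E × E)) (hC : IsClosedConeField C) (hGH : GloballyHyperbolic C)
    (F : Set E) (hF : IsClosed F) (hpast : JMinusSet C F ⊆ F) :
    IsCausalField (restrictCone C Fᶜ) ∧
    LocallySolvable (restrictCone C Fᶜ) ∧
    ∀ K K' : Set E, IsCompact K → IsCompact K' → K ⊆ Fᶜ → K' ⊆ Fᶜ →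
      IsCompact (JPlusSet (restrictCone C Fᶜ) K ∩ JMinusSet (restrictCone C Fᶜ) K') := by
  obtain ⟨hcaus, hdiam, hls⟩ := hGH
  refine ⟨?_, restrict_locallySolvable hC hls hF.isOpen_compl, ?_⟩
  · intro x hx
    obtain ⟨T, hT, γ, hγ, h0, hTx⟩ := hx
    exact hcaus x ⟨T, hT, γ, causal_of_restrict hγ, h0, hTx⟩
  · intro K K' hK hK' hKU hK'U
    have key : JPlusSet (restrictCone C Fᶜ) K ∩ JMinusSet (restrictCone C Fᶜ) K'
        = JPlusSet C K ∩ JMinusSet C K' := by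
      ext y
      simp only [JPlusSet, JMinusSet, Set.mem_inter_iff, Set.mem_iUnion]
      constructor
      · rintro ⟨⟨x, hxK, T, hT, γ, hγ, h0, hTy⟩, ⟨x', hx'K, T', hT', γ', hγ', h0', hT'y⟩⟩
        exact ⟨⟨x, hxK, T, hT, γ, causal_of_restrict hγ, h0, hTy⟩,
          ⟨x', hx'K, T', hT', γ', causal_of_restrict hγ', h0', hT'y⟩⟩
      · rintro ⟨⟨x, hxK, T, hT, γ, hγ, h0, hTy⟩, ⟨x', hx'K, T', hT', γ', hγ', h0', hT'y⟩⟩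
        have hyF : y ∉ F := by
          rw [← hTy]
          exact stay_out hpast hγ (h0 ▸ hKU hxK) T ⟨hT, le_rfl⟩
        constructor
        · refine ⟨x, hxK, T, hT, γ, ?_, h0, hTy⟩
          exact causal_into_restrict hγ
            (fun t ht => stay_out hpast hγ (h0 ▸ hKU hxK) t ht)
        · refine ⟨x', hx'K, T', hT', γ', ?_, h0', hT'y⟩
          exact causal_into_restrict hγ'
            (fun t ht => stay_out hpast hγ' (h0' ▸ hyF) t ht)
    rw [key]
    exact hdiam K K' hK hK'
end

section
/- On the tubular model H × ℝ: let C be a closed cone field on H × ℝ and δ, ε : H → (0,∞) continuous with ε ≤ δ, such that for all (y,z) with |z| ≤ ε(y), every (v_y,v_z) ∈ C(y,z) satisfies v_z ≥ 2δ(y)‖v_y‖ and v_z ≥ 2δ(y)‖(v_y,v_z)‖ (norms w.r.t. a Riemannian metric g). Let f : H → (0,∞) be smooth with ‖df_y‖ + f(y) ≤ ε(y), and let φ : ℝ → [−1,1] be smooth nondecreasing with φ' > 0 on (−1,1), φ = ±1 outside [−1,1], and φ(t) = t on [−α,α]. Define u(y,z) = φ(z/f(y)). Then u is causal for C, temporal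 on u⁻¹((−1,1)), and g-uniform on u⁻¹((−α,α)): du·(v_y,v_z) ≥ ‖(v_y,v_z)‖_g for all cone vectors there. -/
open Set Filter MeasureTheory Topology

/-- On the tubular model `H × ℝ`, with positive continuous `δ, ε ≤ δ` such
that all cone vectors at points with `|z| ≤ ε(y)` satisfy `v_z ≥ 2δ(y)‖v_y‖` and
`v_z ≥ 2δ(y)‖(v_y,v_z)‖`, and with smooth `f > 0` satisfying `‖df_y‖ + f(y) ≤ ε(y)`,
the function `u(y,z) = φ(z/f(y))` is causal for `C`, temporal on `u⁻¹((−1,1))`, and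
`g`-uniform on `u⁻¹((−α,α))`. -/
theorem stmt_14 {F : Type*} [NormedAddCommGroup F] [NormedSpace ℝ F]
    (C : Set ((F × ℝ) × (F × ℝ))) (hC : ∀ p ∈ C, p.2 ≠ (0 : F × ℝ))
    (g : F × ℝ → (F × ℝ) → (F × ℝ) → ℝ) (hg : IsRiemMetric g)
    (δ ε : F → ℝ) (hδc : Continuous δ) (hεc : Continuous ε)
    (hδpos : ∀ y, 0 < δ y) (hεpos : ∀ y, 0 < ε y) (hεδ : ∀ y, ε y ≤ δ y)
    (hcone : ∀ (y : F) (z : ℝ), |z| ≤ ε y → ∀ v : F × ℝ, ((y, z), v) ∈ C →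
      2 * δ y * gnorm g (y, z) (v.1, 0) ≤ v.2 ∧ 2 * δ y * gnorm g (y, z) v ≤ v.2)
    (f : F → ℝ) (hf : ContDiff ℝ (⊤ : ℕ∞) f) (hfpos : ∀ y, 0 < f y)
    (hdf : ∀ (y : F) (z : ℝ), |z| ≤ ε y → ∀ vy : F,
      |fderiv ℝ f y vy| ≤ (ε y - f y) * gnorm g (y, z) (vy, 0))
    (hfε : ∀ y, f y ≤ ε y)
    (α : ℝ) (hα : α ∈ Set.Ioo (0 : ℝ) 1)
    (φ : ℝ → ℝ) (hφ : ContDiff ℝ (⊤ : ℕ∞) φ) (hφmono : Monotone φ)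
    (hφ' : ∀ t ∈ Set.Ioo (-1 : ℝ) 1, 0 < deriv φ t)
    (hφ1 : ∀ t : ℝ, 1 ≤ t → φ t = 1) (hφm1 : ∀ t : ℝ, t ≤ -1 → φ t = -1)
    (hφid : ∀ t ∈ Set.Icc (-α) α, φ t = t)
    (u : F × ℝ → ℝ) (hu : u = fun p => φ (p.2 / f p.1)) :
    (∀ p ∈ C, 0 ≤ fderiv ℝ u p.1 p.2) ∧
    (∀ p ∈ C, u p.1 ∈ Set.Ioo (-1 : ℝ) 1 → 0 < fderiv ℝ u p.1 p.2) ∧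
    (∀ p ∈ C, u p.1 ∈ Set.Ioo (-α) α → gnorm g p.1 p.2 ≤ fderiv ℝ u p.1 p.2) := by
  subst hu
  have hfdiff : Differentiable ℝ f := hf.differentiable (by simp)
  have hφdiff : Differentiable ℝ φ := hφ.differentiable (by simp)
  have hgnn : ∀ (q v : F × ℝ), 0 ≤ gnorm g q v := fun q v => Real.sqrt_nonneg _
  have hgpos : ∀ (q v : F × ℝ), v ≠ 0 → 0 < gnorm g q v := fun q v hv =>
    Real.sqrt_pos.mpr (hg.2.2.2.1 q v hv)
  have hφle : ∀ s : ℝ, φ s ≤ 1 := by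
    intro s
    rcases le_total s 1 with h | h
    · simpa [hφ1 1 le_rfl] using hφmono h
    · exact (hφ1 s h).le
  have hφge : ∀ s : ℝ, -1 ≤ φ s := by
    intro s
    rcases le_total s (-1) with h | h
    · exact (hφm1 s h).ge
    · simpa [hφm1 (-1) le_rfl] using hφmono h
  have hderiv0 : ∀ t : ℝ, 1 ≤ |t| → deriv φ t = 0 := by
    intro t ht
    rcases le_abs.mp ht with h | h
    · have hmax : IsLocalMax φ t :=
        Filter.Eventually.of_forall fun s => (hφle s).trans_eq (hφ1 t h).symm
      exact hmax.deriv_eq_zero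
    · have h' : t ≤ -1 := by linarith
      have hmin : IsLocalMin φ t :=
        Filter.Eventually.of_forall fun s => le_trans (hφm1 t h').le (hφge s)
      exact hmin.deriv_eq_zero
  have hderiv1 : ∀ t ∈ Set.Ioo (-α) α, deriv φ t = 1 := by
    intro t ht
    have he : φ =ᶠ[nhds t] (fun s => s) := by
      filter_upwards [Ioo_mem_nhds ht.1 ht.2] with s hs
      exact hφid s ⟨hs.1.le, hs.2.le⟩
    rw [he.deriv_eq]
    exact deriv_id t
  have key : ∀ (y : F) (z : ℝ) (v : F × ℝ),
      fderiv ℝ (fun p : F × ℝ => φ (p.2 / f p.1)) (y, z) v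
        = deriv φ (z / f y) * ((v.2 * f y - z * fderiv ℝ f y v.1) / (f y) ^ 2) := by
    intro y z v
    have hfy : f y ≠ 0 := (hfpos y).ne'
    have hy1 : HasDerivAt (fun t : ℝ => y + t • v.1) v.1 0 := by
      simpa using ((hasDerivAt_id (0 : ℝ)).smul_const v.1).const_add y
    have hz1 : HasDerivAt (fun t : ℝ => z + t * v.2) v.2 0 := by
      simpa using ((hasDerivAt_id (0 : ℝ)).mul_const v.2).const_add z
    have h0 : y + (0 : ℝ) • v.1 = y := by simp
    have hf1 : HasDerivAt (fun t : ℝ => f (y + t • v.1)) (fderiv ℝ f y v.1) 0 := by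
      have := (hfdiff (y + (0 : ℝ) • v.1)).hasFDerivAt.comp_hasDerivAt 0 hy1
      simpa [h0, Function.comp_def] using this
    have hq : HasDerivAt (fun t : ℝ => (z + t * v.2) / f (y + t • v.1))
        ((v.2 * f y - z * fderiv ℝ f y v.1) / (f y) ^ 2) 0 := by
      have := hz1.div hf1 (by simpa [h0] using hfy)
      simpa [h0, Pi.div_def] using this
    have hφd : HasDerivAt φ (deriv φ (z / f y))
        ((fun t : ℝ => (z + t * v.2) / f (y + t • v.1)) 0) := by
      have : ((fun t : ℝ => (z + t * v.2) / f (y + t • v.1)) 0) = z / f y := by simp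
      rw [this]
      exact (hφdiff (z / f y)).hasDerivAt
    have hcomp := hφd.comp 0 hq
    have hwdiff : DifferentiableAt ℝ (fun p : F × ℝ => p.2 / f p.1) (y, z) := by
      have h1 : DifferentiableAt ℝ (fun p : F × ℝ => f p.1) (y, z) :=
        (hfdiff y).comp _ differentiableAt_fst
      simpa [div_eq_mul_inv, Pi.mul_def, Pi.inv_def] using differentiableAt_snd.mul (h1.inv hfy)
    have hU : DifferentiableAt ℝ (fun p : F × ℝ => φ (p.2 / f p.1)) (y, z) :=
      DifferentiableAt.comp _ (hφdiff (z / f y)) hwdiff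
    have h00 : ((y, z) : F × ℝ) = ((y, z) : F × ℝ) + (0 : ℝ) • v := by simp
    have hL : HasDerivAt (fun t : ℝ => ((y, z) : F × ℝ) + t • v) v 0 := by
      simpa using ((hasDerivAt_id (0 : ℝ)).smul_const v).const_add ((y, z) : F × ℝ)
    have hline := (h00 ▸ hU.hasFDerivAt).comp_hasDerivAt 0 hL
    have hline' : HasDerivAt (fun t : ℝ => φ ((z + t * v.2) / f (y + t • v.1)))
        (fderiv ℝ (fun p : F × ℝ => φ (p.2 / f p.1)) (y, z) v) 0 := by
      simpa [Function.comp_def, Prod.fst_add, Prod.snd_add, smul_eq_mul] using hline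
    exact hline'.unique hcomp
  have main : ∀ (y : F) (z : ℝ) (v : F × ℝ), ((y, z), v) ∈ C → |z| < f y →
      2 * δ y * gnorm g (y, z) v ≤ v.2 ∧
        f y * v.2 / 2 ≤ v.2 * f y - z * fderiv ℝ f y v.1 := by
    intro y z v hv hzf
    have hzε : |z| ≤ ε y := hzf.le.trans (hfε y)
    obtain ⟨hc1, hc2⟩ := hcone y z hzε v hv
    have hG1 : 0 ≤ gnorm g (y, z) (v.1, 0) := hgnn _ _
    have hG : 0 ≤ gnorm g (y, z) v := hgnn _ _
    have hv2 : 0 ≤ v.2 := le_trans (mul_nonneg (by linarith [hδpos y]) hG) hc2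
    refine ⟨hc2, ?_⟩
    have hD := hdf y z hzε v.1
    have hzD : z * fderiv ℝ f y v.1 ≤ f y * ((ε y - f y) * gnorm g (y, z) (v.1, 0)) :=
      calc z * fderiv ℝ f y v.1 ≤ |z * fderiv ℝ f y v.1| := le_abs_self _
        _ = |z| * |fderiv ℝ f y v.1| := abs_mul _ _
        _ ≤ f y * ((ε y - f y) * gnorm g (y, z) (v.1, 0)) :=
            mul_le_mul hzf.le hD (abs_nonneg _) (hfpos y).le
    have hef : 0 ≤ ε y - f y := sub_nonneg.mpr (hfε y)
    have hεδy := hεδ y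
    have hfy := hfpos y
    have hδy := hδpos y
    nlinarith [mul_le_mul_of_nonneg_left hc1 (mul_nonneg hfy.le hef),
      mul_le_mul_of_nonneg_right (show ε y - f y ≤ δ y by linarith)
        (mul_nonneg hfy.le hv2),
      mul_le_mul_of_nonneg_left hzD (by positivity : (0:ℝ) ≤ 2 * δ y)]
  refine ⟨?_, ?_, ?_⟩
  · rintro ⟨⟨y, z⟩, v⟩ hp
    show 0 ≤ fderiv ℝ (fun p : F × ℝ => φ (p.2 / f p.1)) (y, z) v
    rw [key y z v]
    by_cases hzf : |z| < f y
    · obtain ⟨hm1, hm2⟩ := main y z v hp hzf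
      have hv2 : 0 ≤ v.2 := le_trans (mul_nonneg (by linarith [hδpos y]) (hgnn _ _)) hm1
      have ht : z / f y ∈ Set.Ioo (-1 : ℝ) 1 := by
        obtain ⟨h1, h2⟩ := abs_lt.mp hzf
        constructor
        · rw [lt_div_iff₀ (hfpos y)]; linarith
        · rw [div_lt_one (hfpos y)]; linarith
      apply mul_nonneg (hφ' _ ht).le
      apply div_nonneg ?_ (by positivity)
      nlinarith [mul_nonneg (hfpos y).le hv2]
    · have h1 : (1 : ℝ) ≤ |z / f y| := by
        rw [abs_div, abs_of_pos (hfpos y), le_div_iff₀ (hfpos y)]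
        simpa using not_lt.mp hzf
      rw [hderiv0 _ h1, zero_mul]
  · rintro ⟨⟨y, z⟩, v⟩ hp hin
    have hin' : φ (z / f y) ∈ Set.Ioo (-1 : ℝ) 1 := hin
    show 0 < fderiv ℝ (fun p : F × ℝ => φ (p.2 / f p.1)) (y, z) v
    rw [key y z v]
    have hzf : |z| < f y := by
      by_contra hcc
      have h1 : (1 : ℝ) ≤ |z / f y| := by
        rw [abs_div, abs_of_pos (hfpos y), le_div_iff₀ (hfpos y)]
        simpa using not_lt.mp hcc
      rcases le_abs.mp h1 with h | h
      · rw [hφ1 _ h] at hin'; exact absurd hin'.2 (lt_irrefl _)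
      · rw [hφm1 _ (by linarith)] at hin'; exact absurd hin'.1 (lt_irrefl _)
    obtain ⟨hm1, hm2⟩ := main y z v hp hzf
    have hvne : v ≠ 0 := hC _ hp
    have hGpos : 0 < gnorm g (y, z) v := hgpos _ _ hvne
    have hv2 : 0 < v.2 := lt_of_lt_of_le (mul_pos (by linarith [hδpos y]) hGpos) hm1
    have ht : z / f y ∈ Set.Ioo (-1 : ℝ) 1 := by
      obtain ⟨h1, h2⟩ := abs_lt.mp hzf
      constructor
      · rw [lt_div_iff₀ (hfpos y)]; linarith
      · rw [div_lt_one (hfpos y)]; linarith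
    apply mul_pos (hφ' _ ht)
    apply div_pos ?_ (pow_pos (hfpos y) 2)
    nlinarith [mul_pos (hfpos y) hv2]
  · rintro ⟨⟨y, z⟩, v⟩ hp hin
    have hin' : φ (z / f y) ∈ Set.Ioo (-α) α := hin
    show gnorm g (y, z) v ≤ fderiv ℝ (fun p : F × ℝ => φ (p.2 / f p.1)) (y, z) v
    rw [key y z v]
    have hzf : |z| < f y := by
      by_contra hcc
      have h1 : (1 : ℝ) ≤ |z / f y| := by
        rw [abs_div, abs_of_pos (hfpos y), le_div_iff₀ (hfpos y)]
        simpa using not_lt.mp hcc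
      rcases le_abs.mp h1 with h | h
      · rw [hφ1 _ h] at hin'; exact absurd hin'.2 (by linarith [hα.2])
      · rw [hφm1 _ (by linarith)] at hin'
        have := hin'.1; linarith [hα.2]
    have hφα : φ α = α := hφid α ⟨by linarith [hα.1], le_refl α⟩
    have hφmα : φ (-α) = -α := hφid (-α) ⟨le_refl _, by linarith [hα.1]⟩
    have ht : z / f y ∈ Set.Ioo (-α) α := by
      constructor
      · by_contra hcc
        have h := hφmono (not_lt.mp hcc)
        rw [hφmα] at h
        linarith [hin'.1]
      · by_contra hcc
        have h := hφmono (not_lt.mp hcc)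
        rw [hφα] at h
        linarith [hin'.2]
    rw [hderiv1 _ ht, one_mul]
    obtain ⟨hm1, hm2⟩ := main y z v hp hzf
    have hG : 0 ≤ gnorm g (y, z) v := hgnn _ _
    rw [le_div_iff₀ (pow_pos (hfpos y) 2)]
    have hfδ : f y ≤ δ y := (hfε y).trans (hεδ y)
    nlinarith [mul_le_mul_of_nonneg_left hm1 (hfpos y).le,
      mul_le_mul_of_nonneg_left hfδ (mul_nonneg hG (hfpos y).le)]
end
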